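/- arXiv:2109.09678 — 3 statements merged into one kernel-verified Lean document; each statement's English description precedes it below -/
import Mathlib

section
/- Gentzen's boundedness theorem (order-type bound): for any arithmetically definable well-ordering ≺ of natural numbers, if the truth complexity of the Π¹₁ statement TI(≺) (transfinite induction along ≺) is α — i.e., α is the least ordinal with a cut-free ω-logic derivation ⊢^α of the matrix of TI(≺) — then otyp(≺) ≤ 2^α. -/
/-- Formulas of ω-logic in Tait normal form: closed atomic arithmetic sentences
(carrying their meaning as a `Prop`), literals `t ∈ X` / `t ∉ X` for set
variables `X` (coded by naturals) and terms evaluated to naturals, and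
conjunction, disjunction, and ω-branching universal/existential quantifiers. -/
inductive Fmla : Type
  | atom (P : Prop)
  | mem (t X : ℕ)
  | notMem (t X : ℕ)
  | and (A B : Fmla)
  | or (A B : Fmla)
  | all (A : ℕ → Fmla)
  | ex (A : ℕ → Fmla)

/-- The cut-free infinitary (ω-logic) derivability relation `⊢^α Δ` on finite
sets of formulas, with strictly decreasing ordinal tags at each rule. -/
inductive Der : Ordinal → Set Fmla → Prop
  /-- (AxM): `Δ` contains a true atomic sentence. -/
  | axM {α : Ordinal} {Δ : Set Fmla} {P : Prop} (hP : P) (hmem : Fmla.atom P ∈ Δ) :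
      Der α Δ
  /-- (AxL): `Δ` contains `s ∉ X` and `t ∈ X` where `s` and `t` denote equal numbers. -/
  | axL {α : Ordinal} {Δ : Set Fmla} {s t X : ℕ} (hst : s = t)
      (h₁ : Fmla.notMem s X ∈ Δ) (h₂ : Fmla.mem t X ∈ Δ) : Der α Δ
  /-- (∧) -/
  | and {α α₁ α₂ : Ordinal} {Δ : Set Fmla} {A₁ A₂ : Fmla}
      (h₁ : Der α₁ (insert A₁ Δ)) (h₂ : Der α₂ (insert A₂ Δ))
      (hα₁ : α₁ < α) (hα₂ : α₂ < α) (hmem : Fmla.and A₁ A₂ ∈ Δ) : Der α Δ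
  /-- (∨) -/
  | or {α α₀ : Ordinal} {Δ : Set Fmla} {A₁ A₂ : Fmla} {i : Fin 2}
      (h : Der α₀ (insert (if i = 0 then A₁ else A₂) Δ))
      (hα : α₀ < α) (hmem : Fmla.or A₁ A₂ ∈ Δ) : Der α Δ
  /-- (∀), with ω many premises -/
  | all {α : Ordinal} {β : ℕ → Ordinal} {Δ : Set Fmla} {A : ℕ → Fmla}
      (h : ∀ i, Der (β i) (insert (A i) Δ)) (hα : ∀ i, β i < α)
      (hmem : Fmla.all A ∈ Δ) : Der α Δ
  /-- (∃) -/
  | ex {α α₀ : Ordinal} {Δ : Set Fmla} {A : ℕ → Fmla} {i : ℕ}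
      (h : Der α₀ (insert (A i) Δ)) (hα : α₀ < α) (hmem : Fmla.ex A ∈ Δ) : Der α Δ

/-- Truth of a formula in the standard model `(ℕ, 𝒫(ℕ))` under an assignment
`ρ` of subsets of `ℕ` to the set variables. -/
def Val (ρ : ℕ → Set ℕ) : Fmla → Prop
  | .atom P => P
  | .mem t X => t ∈ ρ X
  | .notMem t X => t ∉ ρ X
  | .and A B => Val ρ A ∧ Val ρ B
  | .or A B => Val ρ A ∨ Val ρ B
  | .all A => ∀ i, Val ρ (A i)
  | .ex A => ∃ i, Val ρ (A i)

/-- A formula is `X`-positive if it has no occurrence of a literal `t ∉ X`. -/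
def XPos : Fmla → Prop
  | .atom _ => True
  | .mem _ _ => True
  | .notMem _ _ => False
  | .and A B => XPos A ∧ XPos B
  | .or A B => XPos A ∧ XPos B
  | .all A => ∀ i, XPos (A i)
  | .ex A => ∀ i, XPos (A i)

/-- `A[X ↦ ψ]`: replace each literal `t ∈ X` by the atomic assertion `ψ t`. -/
def substX (ψ : ℕ → Prop) : Fmla → Fmla
  | .atom P => .atom P
  | .mem t _ => .atom (ψ t)
  | .notMem t X => .notMem t X
  | .and A B => .and (substX ψ A) (substX ψ B)
  | .or A B => .or (substX ψ A) (substX ψ B)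
  | .all A => .all fun i => substX ψ (A i)
  | .ex A => .ex fun i => substX ψ (A i)

/-- The field of a binary relation on `ℕ`. -/
def rfield (r : ℕ → ℕ → Prop) : Set ℕ := {x | ∃ y, r x y ∨ r y x}

/-- The Tait normal form of `¬Prog(≺, X)`, with `X` the set variable `0`:
`∃x ((x ∈ field(≺) ∧ ∀y (¬ y ≺ x ∨ y ∈ X)) ∧ x ∉ X)`. -/
def negProg (r : ℕ → ℕ → Prop) : Fmla :=
  .ex fun x =>
    .and (.and (.atom (x ∈ rfield r)) (.all fun y => .or (.atom (¬ r y x)) (.mem y 0)))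
      (.notMem x 0)

/-- The matrix of `TI(≺)`: `¬Prog(≺, X) ∨ ∀x (x ∉ field(≺) ∨ x ∈ X)`. -/
def TIFmla (r : ℕ → ℕ → Prop) : Fmla :=
  .or (negProg r) (.all fun x => .or (.atom (x ∉ rfield r)) (.mem x 0))

/-- `∀ y ∈ field(≺), y ∈ X` in Tait form. -/
def allFieldFmla (r : ℕ → ℕ → Prop) : Fmla :=
  .all fun x => .or (.atom (x ∉ rfield r)) (.mem x 0)

set_option linter.deprecated false

namespace GentzenAux

open Ordinal Order

variable {r : ℕ → ℕ → Prop}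

/-- The assignment sending every set variable to `{n | rank n < γ}`. -/
def rho (hwf : WellFounded r) (γ : Ordinal) : ℕ → Set ℕ := fun _ => {n | (hwf.apply n).rank < γ}

/-- `X`-positive formulas are monotone in `γ` under `rho`. -/
lemma val_mono (hwf : WellFounded r) {γ γ' : Ordinal} (h : γ ≤ γ') :
    ∀ {A : Fmla}, XPos A → Val (rho hwf γ) A → Val (rho hwf γ') A := by
  intro A
  induction A with
  | atom P => exact fun _ hv => hv
  | mem t X => exact fun _ hv => lt_of_lt_of_le hv h
  | notMem t X => intro hp; exact absurd hp (by simp [XPos])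
  | and A B ihA ihB =>
      rintro ⟨hA, hB⟩ ⟨vA, vB⟩; exact ⟨ihA hA vA, ihB hB vB⟩
  | or A B ihA ihB =>
      rintro ⟨hA, hB⟩ (v | v); exacts [Or.inl (ihA hA v), Or.inr (ihB hB v)]
  | all A ih => intro hp v i; exact ih i (hp i) (v i)
  | ex A ih => rintro hp ⟨i, v⟩; exact ⟨i, ih i (hp i) v⟩

/-- The positive part of the `∃`-witness of `¬Prog`. -/
def AF (r : ℕ → ℕ → Prop) (x : ℕ) : Fmla :=
  .and (.atom (x ∈ rfield r)) (.all fun y => .or (.atom (¬ r y x)) (.mem y 0))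

/-- The `∃`-witness of `¬Prog`. -/
def BF (r : ℕ → ℕ → Prop) (x : ℕ) : Fmla := .and (AF r x) (.notMem x 0)

lemma negProg_eq : negProg r = .ex (BF r) := rfl

lemma xpos_AF (x : ℕ) : XPos (AF r x) := by
  refine ⟨trivial, fun y => ⟨trivial, trivial⟩⟩

lemma xpos_allField : XPos (allFieldFmla r) := fun x => ⟨trivial, trivial⟩

lemma not_xpos_negProg : ¬ XPos (negProg r) := fun h => (h 0).2

lemma not_xpos_TIFmla : ¬ XPos (TIFmla r) := fun h => not_xpos_negProg h.1

/-- Shape invariant on formulas occurring in a derivation of `TI(≺)`. -/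
def Shape (r : ℕ → ℕ → Prop) (A : Fmla) : Prop :=
  XPos A ∨ A = TIFmla r ∨ A = negProg r ∨ (∃ x, A = BF r x) ∨ ∃ s, A = Fmla.notMem s 0

/-- Conclusion of the boundedness lemma. -/
def Concl (r : ℕ → ℕ → Prop) (hwf : WellFounded r) (γ : Ordinal) (D : Fmla) : Prop :=
  (XPos D ∧ Val (rho hwf γ) D) ∨ (D = TIFmla r ∧ Val (rho hwf γ) (allFieldFmla r))

lemma concl_mono (hwf : WellFounded r) {γ γ' : Ordinal} (h : γ ≤ γ') {D : Fmla} :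
    Concl r hwf γ D → Concl r hwf γ' D := by
  rintro (⟨hp, hv⟩ | ⟨hD, hv⟩)
  · exact Or.inl ⟨hp, val_mono hwf h hp hv⟩
  · exact Or.inr ⟨hD, val_mono hwf h xpos_allField hv⟩

lemma two_opow_le {α₀ α : Ordinal} (h : α₀ ≤ α) : (2 : Ordinal) ^ α₀ ≤ 2 ^ α :=
  opow_le_opow_right zero_lt_two h

lemma two_opow_add_le {α₁ α₂ α : Ordinal} (h₁ : α₁ < α) (h₂ : α₂ < α) :
    (2 : Ordinal) ^ α₁ + 2 ^ α₂ ≤ 2 ^ α := by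
  have hμ : max α₁ α₂ < α := max_lt h₁ h₂
  calc (2 : Ordinal) ^ α₁ + 2 ^ α₂
      ≤ 2 ^ max α₁ α₂ + 2 ^ max α₁ α₂ :=
        add_le_add (two_opow_le (le_max_left _ _)) (two_opow_le (le_max_right _ _))
    _ = 2 ^ max α₁ α₂ * 2 := by
        rw [show (2 : Ordinal) = 1 + 1 from one_add_one_eq_two.symm, mul_add, mul_one]
    _ = 2 ^ Order.succ (max α₁ α₂) := (opow_succ 2 _).symm
    _ ≤ 2 ^ α := two_opow_le (Order.succ_le_of_lt hμ)

lemma rank_le_of (hwf : WellFounded r) {x : ℕ} {γ : Ordinal}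
    (h : ∀ y, r y x → (hwf.apply y).rank < γ) : (hwf.apply x).rank ≤ γ := by
  rw [(hwf.apply x).rank_eq]
  exact ciSup_le' fun b => Order.succ_le_of_lt (h b.1 b.2)

lemma wit_insert {Δ : Set Fmla} {C : Fmla} {β : Ordinal} (hwf : WellFounded r)
    (hC : ∀ s, C ≠ Fmla.notMem s 0)
    (hwit : ∀ s, Fmla.notMem s 0 ∈ Δ → (hwf.apply s).rank ≤ β) :
    ∀ s, Fmla.notMem s 0 ∈ insert C Δ → (hwf.apply s).rank ≤ β := by
  intro s hs
  rcases Set.mem_insert_iff.1 hs with h | h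
  · exact absurd h.symm (hC s)
  · exact hwit s h

lemma xpos_ne_notMem {C : Fmla} (h : XPos C) : ∀ s, C ≠ Fmla.notMem s 0 := by
  rintro s rfl; exact h

/-- The boundedness lemma. -/
lemma main (hwf : WellFounded r) {α : Ordinal} {Γ : Set Fmla} (hder : Der α Γ) :
    ∀ β : Ordinal, (∀ A ∈ Γ, Shape r A) →
      (∀ s, Fmla.notMem s 0 ∈ Γ → (hwf.apply s).rank ≤ β) →
      ∃ D ∈ Γ, Concl r hwf (β + 2 ^ α) D := by
  induction hder with
  | @axM α Δ P hP hmem =>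
      intro β hshape hwit
      exact ⟨_, hmem, Or.inl ⟨trivial, hP⟩⟩
  | @axL α Δ s t X hst h₁ h₂ =>
      intro β hshape hwit
      have hX : X = 0 ∧ (hwf.apply s).rank ≤ β := by
        rcases hshape _ h₁ with hp | h | h | ⟨x, h⟩ | ⟨s', h⟩
        · exact absurd hp (by simp [XPos])
        · exact absurd h (by simp [TIFmla])
        · exact absurd h (by simp [negProg])
        · exact absurd h (by simp [BF, AF])
        · obtain ⟨rfl, rfl⟩ : s = s' ∧ X = 0 := by
            simpa [Fmla.notMem.injEq, and_comm] using h
          exact ⟨rfl, hwit s h₁⟩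
      obtain ⟨rfl, hrk⟩ := hX
      refine ⟨_, h₂, Or.inl ⟨trivial, ?_⟩⟩
      show (hwf.apply t).rank < β + 2 ^ α
      subst hst
      exact lt_of_le_of_lt hrk (lt_add_of_pos_right β (opow_pos α zero_lt_two))
  | @and α α₁ α₂ Δ A₁ A₂ h₁ h₂ hα₁ hα₂ hmem ih₁ ih₂ =>
      intro β hshape hwit
      rcases hshape _ hmem with hp | h | h | ⟨x, h⟩ | ⟨s, h⟩
      · -- positive conjunction
        obtain ⟨hp₁, hp₂⟩ := hp
        obtain ⟨D, hD, hc⟩ := ih₁ β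
          (by rintro A (rfl | hA); exacts [Or.inl hp₁, hshape _ hA])
          (wit_insert hwf (xpos_ne_notMem hp₁) hwit)
        rcases Set.mem_insert_iff.1 hD with rfl | hD
        · rcases hc with ⟨_, hv₁⟩ | ⟨hT, _⟩
          · obtain ⟨D', hD', hc'⟩ := ih₂ β
              (by rintro A (rfl | hA); exacts [Or.inl hp₂, hshape _ hA])
              (wit_insert hwf (xpos_ne_notMem hp₂) hwit)
            rcases Set.mem_insert_iff.1 hD' with rfl | hD'
            · rcases hc' with ⟨_, hv₂⟩ | ⟨hT, _⟩
              · refine ⟨_, hmem, Or.inl ⟨⟨hp₁, hp₂⟩, ?_, ?_⟩⟩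
                · exact val_mono hwf (add_le_add_right (two_opow_le hα₁.le) β) hp₁ hv₁
                · exact val_mono hwf (add_le_add_right (two_opow_le hα₂.le) β) hp₂ hv₂
              · exact absurd (hT ▸ hp₂) not_xpos_TIFmla
            · exact ⟨D', hD', concl_mono hwf (add_le_add_right (two_opow_le hα₂.le) β) hc'⟩
          · exact absurd (hT ▸ hp₁) not_xpos_TIFmla
        · exact ⟨D, hD, concl_mono hwf (add_le_add_right (two_opow_le hα₁.le) β) hc⟩
      · exact absurd h (by simp [TIFmla])
      · exact absurd h (by simp [negProg])
      · -- the conjunction is `BF r x`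
        obtain ⟨rfl, rfl⟩ : A₁ = AF r x ∧ A₂ = Fmla.notMem x 0 := by
          simpa [BF, Fmla.and.injEq] using h
        obtain ⟨D, hD, hc⟩ := ih₁ β
          (by rintro A (rfl | hA); exacts [Or.inl (xpos_AF x), hshape _ hA])
          (wit_insert hwf (xpos_ne_notMem (xpos_AF x)) hwit)
        rcases Set.mem_insert_iff.1 hD with rfl | hD
        · rcases hc with ⟨_, hv⟩ | ⟨hT, _⟩
          · -- `AF x` is true at level `β + 2^α₁`, hence `rank x ≤ β + 2^α₁`
            have hrk : (hwf.apply x).rank ≤ β + 2 ^ α₁ := by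
              refine rank_le_of hwf fun y hy => ?_
              have := hv.2 y
              rcases this with hny | hlt
              · exact absurd hy hny
              · exact hlt
            obtain ⟨D', hD', hc'⟩ := ih₂ (β + 2 ^ α₁)
              (by rintro A (rfl | hA)
                  exacts [Or.inr (Or.inr (Or.inr (Or.inr ⟨x, rfl⟩))), hshape _ hA])
              (by intro s hs
                  rcases Set.mem_insert_iff.1 hs with hh | hh
                  · obtain ⟨rfl, -⟩ : s = x ∧ (0 : ℕ) = 0 := by
                      simpa [Fmla.notMem.injEq] using hh
                    exact hrk
                  · exact le_trans (hwit s hh) le_self_add)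
            rcases Set.mem_insert_iff.1 hD' with rfl | hD'
            · rcases hc' with ⟨hpn, _⟩ | ⟨hT, _⟩
              · exact absurd hpn (by simp [XPos])
              · exact absurd hT (by simp [TIFmla])
            · refine ⟨D', hD', concl_mono hwf ?_ hc'⟩
              rw [add_assoc]
              exact add_le_add_right (two_opow_add_le hα₁ hα₂) β
          · exact absurd hT (by simp [AF, TIFmla])
        · exact ⟨D, hD, concl_mono hwf (add_le_add_right (two_opow_le hα₁.le) β) hc⟩
      · exact absurd h (by simp)
  | @or α α₀ Δ A₁ A₂ i h hα hmem ih =>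
      intro β hshape hwit
      rcases hshape _ hmem with hp | h' | h' | ⟨x, h'⟩ | ⟨s, h'⟩
      · -- positive disjunction
        obtain ⟨hp₁, hp₂⟩ := hp
        have hC : XPos (if i = 0 then A₁ else A₂) := by split <;> assumption
        obtain ⟨D, hD, hc⟩ := ih β
          (by rintro A (rfl | hA); exacts [Or.inl hC, hshape _ hA])
          (wit_insert hwf (xpos_ne_notMem hC) hwit)
        rcases Set.mem_insert_iff.1 hD with rfl | hD
        · rcases hc with ⟨_, hv⟩ | ⟨hT, _⟩
          · refine ⟨_, hmem, Or.inl ⟨⟨hp₁, hp₂⟩,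
              val_mono hwf (add_le_add_right (two_opow_le hα.le) β) ⟨hp₁, hp₂⟩ ?_⟩⟩
            show Val (rho hwf (β + 2 ^ α₀)) (Fmla.or A₁ A₂)
            by_cases hi : i = 0
            · rw [if_pos hi] at hv; exact Or.inl hv
            · rw [if_neg hi] at hv; exact Or.inr hv
          · exact absurd (hT ▸ hC) not_xpos_TIFmla
        · exact ⟨D, hD, concl_mono hwf (add_le_add_right (two_opow_le hα.le) β) hc⟩
      · -- the disjunction is `TIFmla r`
        obtain ⟨rfl, rfl⟩ : A₁ = negProg r ∧ A₂ = allFieldFmla r := by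
          simpa [TIFmla, allFieldFmla, Fmla.or.injEq] using h'
        have hshapeC : Shape r (if i = 0 then negProg r else allFieldFmla r) := by
          split
          · exact Or.inr (Or.inr (Or.inl rfl))
          · exact Or.inl xpos_allField
        have hCnm : ∀ s, (if i = 0 then negProg r else allFieldFmla r) ≠ Fmla.notMem s 0 := by
          intro s; split <;> simp [negProg, allFieldFmla]
        obtain ⟨D, hD, hc⟩ := ih β
          (by rintro A (rfl | hA); exacts [hshapeC, hshape _ hA])
          (wit_insert hwf hCnm hwit)
        rcases Set.mem_insert_iff.1 hD with rfl | hD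
        · by_cases hi : i = 0
          · rw [if_pos hi] at hc
            rcases hc with ⟨hpn, _⟩ | ⟨hT, _⟩
            · exact absurd hpn not_xpos_negProg
            · exact absurd hT (by simp [negProg, TIFmla])
          · rw [if_neg hi] at hc
            rcases hc with ⟨_, hv⟩ | ⟨hT, hv⟩
            · exact ⟨_, hmem, Or.inr ⟨rfl,
                val_mono hwf (add_le_add_right (two_opow_le hα.le) β) xpos_allField hv⟩⟩
            · exact ⟨_, hmem, Or.inr ⟨rfl,
                val_mono hwf (add_le_add_right (two_opow_le hα.le) β) xpos_allField hv⟩⟩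
        · exact ⟨D, hD, concl_mono hwf (add_le_add_right (two_opow_le hα.le) β) hc⟩
      · exact absurd h' (by simp [negProg])
      · exact absurd h' (by simp [BF, AF])
      · exact absurd h' (by simp)
  | @all α βo Δ A h hα hmem ih =>
      intro β hshape hwit
      rcases hshape _ hmem with hp | h' | h' | ⟨x, h'⟩ | ⟨s, h'⟩
      · by_cases hex : ∃ D ∈ Δ, Concl r hwf (β + 2 ^ α) D
        · exact hex
        · refine ⟨_, hmem, Or.inl ⟨hp, fun i => ?_⟩⟩
          obtain ⟨D, hD, hc⟩ := ih i β
            (by rintro B (rfl | hB); exacts [Or.inl (hp i), hshape _ hB])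
            (wit_insert hwf (xpos_ne_notMem (hp i)) hwit)
          rcases Set.mem_insert_iff.1 hD with rfl | hD
          · rcases hc with ⟨_, hv⟩ | ⟨hT, _⟩
            · exact val_mono hwf (add_le_add_right (two_opow_le (hα i).le) β) (hp i) hv
            · exact absurd (hT ▸ hp i) not_xpos_TIFmla
          · exact absurd ⟨D, hD,
              concl_mono hwf (add_le_add_right (two_opow_le (hα i).le) β) hc⟩ hex
      · exact absurd h' (by simp [TIFmla])
      · exact absurd h' (by simp [negProg])
      · exact absurd h' (by simp [BF, AF])
      · exact absurd h' (by simp)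
  | @ex α α₀ Δ A i h hα hmem ih =>
      intro β hshape hwit
      rcases hshape _ hmem with hp | h' | h' | ⟨x, h'⟩ | ⟨s, h'⟩
      · obtain ⟨D, hD, hc⟩ := ih β
          (by rintro B (rfl | hB); exacts [Or.inl (hp i), hshape _ hB])
          (wit_insert hwf (xpos_ne_notMem (hp i)) hwit)
        rcases Set.mem_insert_iff.1 hD with rfl | hD
        · rcases hc with ⟨_, hv⟩ | ⟨hT, _⟩
          · exact ⟨_, hmem, Or.inl ⟨hp,
              val_mono hwf (add_le_add_right (two_opow_le hα.le) β) hp ⟨i, hv⟩⟩⟩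
          · exact absurd (hT ▸ hp i) not_xpos_TIFmla
        · exact ⟨D, hD, concl_mono hwf (add_le_add_right (two_opow_le hα.le) β) hc⟩
      · exact absurd h' (by simp [TIFmla])
      · -- the existential is `negProg r`
        have hA : A = BF r := by
          have := h'.trans negProg_eq
          simpa [Fmla.ex.injEq] using this
        subst hA
        obtain ⟨D, hD, hc⟩ := ih β
          (by rintro B (rfl | hB)
              exacts [Or.inr (Or.inr (Or.inr (Or.inl ⟨i, rfl⟩))), hshape _ hB])
          (wit_insert hwf (by simp [BF, AF]) hwit)
        rcases Set.mem_insert_iff.1 hD with rfl | hD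
        · rcases hc with ⟨hpn, _⟩ | ⟨hT, _⟩
          · exact absurd hpn (fun hh => hh.2)
          · exact absurd hT (by simp [BF, AF, TIFmla])
        · exact ⟨D, hD, concl_mono hwf (add_le_add_right (two_opow_le hα.le) β) hc⟩
      · exact absurd h' (by simp [BF, AF])
      · exact absurd h' (by simp)

end GentzenAux


/-- Gentzen's boundedness theorem: if `α` is the truth complexity of `TI(≺)`,
i.e. the least ordinal with a cut-free ω-derivation `⊢^α` of the matrix of
`TI(≺)`, then `otyp(≺) ≤ 2^α`, where `otyp(≺)` is the supremum of
`rank k + 1` over the field of `≺`. -/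
theorem gentzen_boundedness (r : ℕ → ℕ → Prop) (hwf : WellFounded r)
    (htrans : ∀ x y z, r x y → r y z → r x z)
    (htri : ∀ x ∈ rfield r, ∀ y ∈ rfield r, r x y ∨ x = y ∨ r y x)
    (α : Ordinal) (hder : Der α {TIFmla r})
    (hleast : ∀ β, Der β {TIFmla r} → α ≤ β) :
    (⨆ k : rfield r, Order.succ ((hwf.apply k.1).rank)) ≤ 2 ^ α := by
  obtain ⟨D, hD, hc⟩ := GentzenAux.main hwf hder 0
    (by intro A hA
        rw [Set.mem_singleton_iff] at hA
        subst hA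
        exact Or.inr (Or.inl rfl))
    (by intro s hs
        rw [Set.mem_singleton_iff] at hs
        exact absurd hs (by simp [TIFmla]))
  rw [Set.mem_singleton_iff] at hD
  subst hD
  rcases hc with ⟨hp, _⟩ | ⟨_, hv⟩
  · exact absurd hp GentzenAux.not_xpos_TIFmla
  · rw [zero_add] at hv
    refine ciSup_le' fun k => ?_
    rw [Order.succ_le_iff]
    rcases hv k.1 with hnf | hlt
    · exact absurd k.2 hnf
    · exact hlt
end

section
/- Boundedness lemma: let α be an ordinal, ≺ an (arithmetic) well-ordering on ℕ, and Δ a finite set of X-positive formulas. If ⊢^α ¬Prog(≺,X), t₁ ∉ X, …, t_n ∉ X, Δ in the cut-free ω-calculus, then the universal closure ∀X ⋁ Δ[X ↦ ≺_γ] is true in the standard model, where γ = β + 2^α and β = max{|t₁|_≺, …, |t_n|_≺}. -/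
set_option linter.deprecated false

section Aux

open Classical

lemma Der.mono {α α' : Ordinal} {Γ Γ' : Set Fmla} (h : Der α Γ) (hsub : Γ ⊆ Γ')
    (hle : α ≤ α') : Der α' Γ' := by
  induction h generalizing Γ' α' with
  | axM hP hmem => exact .axM hP (hsub hmem)
  | axL hst h1 h2 => exact .axL hst (hsub h1) (hsub h2)
  | and h1 h2 hα1 hα2 hmem ih1 ih2 =>
      exact .and (ih1 (Set.insert_subset_insert hsub) le_rfl)
        (ih2 (Set.insert_subset_insert hsub) le_rfl)
        (hα1.trans_le hle) (hα2.trans_le hle) (hsub hmem)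
  | or h hα hmem ih =>
      exact .or (ih (Set.insert_subset_insert hsub) le_rfl) (hα.trans_le hle) (hsub hmem)
  | all h hα hmem ih =>
      exact .all (fun i => ih i (Set.insert_subset_insert hsub) le_rfl)
        (fun i => (hα i).trans_le hle) (hsub hmem)
  | ex h hα hmem ih =>
      exact .ex (ih (Set.insert_subset_insert hsub) le_rfl) (hα.trans_le hle) (hsub hmem)

lemma insert_diff_shuffle {C E D : Fmla} {Γ : Set Fmla} :
    insert C ((insert E Γ) \ {D}) ⊆ insert E (insert C (Γ \ {D})) := by
  intro x hx
  simp only [Set.mem_insert_iff, Set.mem_diff, Set.mem_singleton_iff] at hx ⊢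
  tauto

lemma Der.inv_and {α : Ordinal} {Γ : Set Fmla} (h : Der α Γ) (A B C : Fmla)
    (hC : C = A ∨ C = B) : Der α (insert C (Γ \ {Fmla.and A B})) := by
  induction h with
  | axM hP hmem => exact .axM hP (Set.mem_insert_iff.mpr (Or.inr ⟨hmem, by simp⟩))
  | axL hst h1 h2 =>
      exact .axL hst (Set.mem_insert_iff.mpr (Or.inr ⟨h1, by simp⟩))
        (Set.mem_insert_iff.mpr (Or.inr ⟨h2, by simp⟩))
  | @and α' α₁ α₂ Γ' A₁ A₂ h1 h2 hα1 hα2 hmem ih1 ih2 =>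
      by_cases hD : Fmla.and A₁ A₂ = Fmla.and A B
      · obtain ⟨rfl, rfl⟩ := Fmla.and.inj hD
        rcases hC with rfl | rfl
        · refine ih1.mono ?_ hα1.le
          intro x hx
          simp only [Set.mem_insert_iff, Set.mem_diff, Set.mem_singleton_iff] at hx ⊢
          tauto
        · refine ih2.mono ?_ hα2.le
          intro x hx
          simp only [Set.mem_insert_iff, Set.mem_diff, Set.mem_singleton_iff] at hx ⊢
          tauto
      · exact .and (ih1.mono insert_diff_shuffle le_rfl) (ih2.mono insert_diff_shuffle le_rfl)
          hα1 hα2 (Set.mem_insert_iff.mpr (Or.inr ⟨hmem, by simpa using hD⟩))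
  | or h hα hmem ih =>
      exact .or (ih.mono insert_diff_shuffle le_rfl) hα
        (Set.mem_insert_iff.mpr (Or.inr ⟨hmem, by simp⟩))
  | all h hα hmem ih =>
      exact .all (fun i => (ih i).mono insert_diff_shuffle le_rfl) hα
        (Set.mem_insert_iff.mpr (Or.inr ⟨hmem, by simp⟩))
  | ex h hα hmem ih =>
      exact .ex (ih.mono insert_diff_shuffle le_rfl) hα
        (Set.mem_insert_iff.mpr (Or.inr ⟨hmem, by simp⟩))

lemma val_mono {ψ ψ' : ℕ → Prop} (h : ∀ t, ψ t → ψ' t) (ρ : ℕ → Set ℕ) :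
    ∀ A : Fmla, XPos A → Val ρ (substX ψ A) → Val ρ (substX ψ' A) := by
  intro A
  induction A with
  | atom P => exact fun _ => id
  | mem t X => exact fun _ => h t
  | notMem t X => exact fun hp => hp.elim
  | and A B ihA ihB => exact fun hp v => ⟨ihA hp.1 v.1, ihB hp.2 v.2⟩
  | or A B ihA ihB =>
      rintro hp (v | v)
      exacts [Or.inl (ihA hp.1 v), Or.inr (ihB hp.2 v)]
  | all A ih =>
      intro hp v
      simp only [substX, Val] at v ⊢
      exact fun i => ih i (hp i) (v i)
  | ex A ih => rintro hp ⟨i, v⟩; exact ⟨i, ih i (hp i) v⟩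

lemma mem_seq_cases {r : ℕ → ℕ → Prop} {ts : Finset ℕ} {Δ : Set Fmla} {C : Fmla}
    (h : C ∈ {negProg r} ∪ ((fun t => Fmla.notMem t 0) '' ↑ts) ∪ Δ) :
    C = negProg r ∨ (∃ t ∈ ts, C = Fmla.notMem t 0) ∨ C ∈ Δ := by
  rcases h with (h | h) | h
  · exact Or.inl h
  · obtain ⟨t, ht, rfl⟩ := h
    exact Or.inr (Or.inl ⟨t, ht, rfl⟩)
  · exact Or.inr (Or.inr h)

lemma insert_union_third {C : Fmla} {S T Δ : Set Fmla} :
    insert C (S ∪ T ∪ Δ) = S ∪ T ∪ insert C Δ :=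
  Set.union_insert.symm

lemma bounded_aux (r : ℕ → ℕ → Prop) (hwf : WellFounded r) (α : Ordinal) :
    ∀ (ts : Finset ℕ) (Δ : Set Fmla), (∀ A ∈ Δ, XPos A) →
      Der α ({negProg r} ∪ ((fun t => Fmla.notMem t 0) '' ↑ts) ∪ Δ) →
      ∀ ρ : ℕ → Set ℕ, ∃ A ∈ Δ,
        Val ρ (substX (fun t => (hwf.apply t).rank < ts.sup (fun t => (hwf.apply t).rank) + 2 ^ α) A) := by
  induction α using Ordinal.induction with
  | h α IH =>
  intro ts Δ hpos hder ρ
  have h2 : (0 : Ordinal) < 2 := by norm_num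
  have hdub : ∀ {α₀ : Ordinal}, α₀ < α → (2 : Ordinal) ^ α₀ + 2 ^ α₀ ≤ 2 ^ α := by
    intro α₀ hα₀
    have e1 : (2 : Ordinal) ^ α₀ + 2 ^ α₀ = 2 ^ α₀ * 2 := by
      rw [show (2 : Ordinal) = 1 + 1 by norm_num, mul_add, mul_one]
    rw [e1, ← Ordinal.opow_succ]
    exact Ordinal.opow_le_opow_right h2 (Order.succ_le_of_lt hα₀)
  set β := ts.sup (fun t => (hwf.apply t).rank) with hβ
  have step : ∀ {α₀ : Ordinal}, α₀ ≤ α → ∀ t, (hwf.apply t).rank < β + 2 ^ α₀ →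
      (hwf.apply t).rank < β + 2 ^ α := by
    intro α₀ hle t ht
    exact ht.trans_le (add_le_add_right (Ordinal.opow_le_opow_right h2 hle) β)
  cases hder with
  | axM hP hmem =>
      rcases mem_seq_cases hmem with h | h | h
      · exact absurd h (by simp [negProg])
      · obtain ⟨t, -, h⟩ := h
        exact absurd h (by simp)
      · exact ⟨_, h, hP⟩
  | @axL _ _ s t X hst h1 h2' =>
      rcases mem_seq_cases h1 with h | h | h
      · exact absurd h (by simp [negProg])
      · obtain ⟨u, hu, heq⟩ := h
        have hs : s = u := (Fmla.notMem.inj heq).1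
        rcases mem_seq_cases h2' with h' | h' | h'
        · exact absurd h' (by simp [negProg])
        · obtain ⟨v, -, h'⟩ := h'
          exact absurd h' (by simp)
        · refine ⟨_, h', ?_⟩
          show (hwf.apply t).rank < β + 2 ^ α
          have h1t : (hwf.apply t).rank ≤ β := by
            rw [← hst, hs]
            exact Finset.le_sup (f := fun t => (hwf.apply t).rank) hu
          exact h1t.trans_lt (by simpa using add_lt_add_right (Ordinal.opow_pos α h2) β)
      · exact absurd (hpos _ h) (by simp [XPos])
  | @and _ α₁ α₂ _ A₁ A₂ h1 h2' hα1 hα2 hmem =>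
      rcases mem_seq_cases hmem with h | h | h
      · exact absurd h (by simp [negProg])
      · obtain ⟨t, -, h⟩ := h
        exact absurd h (by simp)
      · have hp := hpos _ h
        have hpA₁ : XPos A₁ := hp.1
        have hpA₂ : XPos A₂ := hp.2
        have d1 : Der α₁ ({negProg r} ∪ ((fun t => Fmla.notMem t 0) '' ↑ts) ∪ insert A₁ Δ) :=
          h1.mono insert_union_third.subset le_rfl
        obtain ⟨B₁, hB₁, v₁⟩ := IH α₁ hα1 ts (insert A₁ Δ)
          (fun A hA => by
            rw [Set.mem_insert_iff] at hA
            rcases hA with rfl | hA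
            exacts [hpA₁, hpos _ hA]) d1 ρ
        rw [Set.mem_insert_iff] at hB₁
        rcases hB₁ with rfl | hB₁
        · have d2 : Der α₂ ({negProg r} ∪ ((fun t => Fmla.notMem t 0) '' ↑ts) ∪ insert A₂ Δ) :=
            h2'.mono insert_union_third.subset le_rfl
          obtain ⟨B₂, hB₂, v₂⟩ := IH α₂ hα2 ts (insert A₂ Δ)
            (fun A hA => by
              rw [Set.mem_insert_iff] at hA
              rcases hA with rfl | hA
              exacts [hpA₂, hpos _ hA]) d2 ρ
          rw [Set.mem_insert_iff] at hB₂
          rcases hB₂ with rfl | hB₂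
          · exact ⟨_, h, ⟨val_mono (step hα1.le) ρ _ hpA₁ v₁,
              val_mono (step hα2.le) ρ _ hpA₂ v₂⟩⟩
          · exact ⟨B₂, hB₂, val_mono (step hα2.le) ρ _ (hpos _ hB₂) v₂⟩
        · exact ⟨B₁, hB₁, val_mono (step hα1.le) ρ _ (hpos _ hB₁) v₁⟩
  | @or _ α₀ _ A₁ A₂ i h1 hα hmem =>
      rcases mem_seq_cases hmem with h | h | h
      · exact absurd h (by simp [negProg])
      · obtain ⟨t, -, h⟩ := h
        exact absurd h (by simp)
      · have hp := hpos _ h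
        have hpC : XPos (if i = 0 then A₁ else A₂) := by
          split
          exacts [hp.1, hp.2]
        have d1 : Der α₀ ({negProg r} ∪ ((fun t => Fmla.notMem t 0) '' ↑ts) ∪
            insert (if i = 0 then A₁ else A₂) Δ) :=
          h1.mono insert_union_third.subset le_rfl
        obtain ⟨B, hB, v⟩ := IH α₀ hα ts _
          (fun A hA => by
            rw [Set.mem_insert_iff] at hA
            rcases hA with rfl | hA
            exacts [hpC, hpos _ hA]) d1 ρ
        rw [Set.mem_insert_iff] at hB
        rcases hB with rfl | hB
        · refine ⟨_, h, ?_⟩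
          have v' := val_mono (step hα.le) ρ _ hpC v
          show Val ρ (substX _ A₁) ∨ Val ρ (substX _ A₂)
          by_cases hi : i = 0
          · left; simpa [hi] using v'
          · right; simpa [hi] using v'
        · exact ⟨B, hB, val_mono (step hα.le) ρ _ (hpos _ hB) v⟩
  | @all _ βf _ A h1 hα hmem =>
      rcases mem_seq_cases hmem with h | h | h
      · exact absurd h (by simp [negProg])
      · obtain ⟨t, -, h⟩ := h
        exact absurd h (by simp)
      · have hp := hpos _ h
        by_cases hgoal : ∃ B ∈ Δ,
            Val ρ (substX (fun t => (hwf.apply t).rank < β + 2 ^ α) B)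
        · exact hgoal
        · refine ⟨_, h, ?_⟩
          intro i
          have d1 : Der (βf i) ({negProg r} ∪ ((fun t => Fmla.notMem t 0) '' ↑ts) ∪
              insert (A i) Δ) := (h1 i).mono insert_union_third.subset le_rfl
          obtain ⟨B, hB, v⟩ := IH (βf i) (hα i) ts (insert (A i) Δ)
            (fun C hC => by
              rw [Set.mem_insert_iff] at hC
              rcases hC with rfl | hC
              exacts [hp i, hpos _ hC]) d1 ρ
          rw [Set.mem_insert_iff] at hB
          rcases hB with rfl | hB
          · exact val_mono (step (hα i).le) ρ _ (hp i) v
          · exact absurd ⟨B, hB, val_mono (step (hα i).le) ρ _ (hpos _ hB) v⟩ hgoal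
  | @ex _ α₀ _ A n h1 hα hmem =>
      rcases mem_seq_cases hmem with h | h | h
      · -- principal formula is ¬Prog
        unfold negProg at h
        obtain rfl : A = _ := Fmla.ex.inj h
        set P : Fmla := Fmla.and (Fmla.atom (n ∈ rfield r))
          (Fmla.all fun y => Fmla.or (Fmla.atom (¬ r y n)) (Fmla.mem y 0)) with hP
        have hpP : XPos P := ⟨trivial, fun y => ⟨trivial, trivial⟩⟩
        have d1 : Der α₀ ({negProg r} ∪ ((fun t => Fmla.notMem t 0) '' ↑ts) ∪ insert P Δ) := by
          refine (h1.inv_and P (Fmla.notMem n 0) P (Or.inl rfl)).mono ?_ le_rfl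
          intro x hx
          simp only [Set.mem_insert_iff, Set.mem_diff, Set.mem_singleton_iff,
            Set.mem_union] at hx ⊢
          tauto
        obtain ⟨B, hB, v⟩ := IH α₀ hα ts (insert P Δ)
          (fun C hC => by
            rw [Set.mem_insert_iff] at hC
            rcases hC with rfl | hC
            exacts [hpP, hpos _ hC]) d1 ρ
        rw [Set.mem_insert_iff] at hB
        rcases hB with rfl | hB
        · -- the side formula of ¬Prog is true: bound the rank of n
          obtain ⟨-, hall⟩ := v
          have hrank : (hwf.apply n).rank ≤ β + 2 ^ α₀ := by
            rw [(hwf.apply n).rank_eq]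
            apply Ordinal.iSup_le
            rintro ⟨y, hy⟩
            rcases hall y with hy' | hlt
            · exact absurd hy hy'
            · exact Order.succ_le_of_lt hlt
          have d2 : Der α₀ ({negProg r} ∪
              ((fun t => Fmla.notMem t 0) '' ↑(insert n ts)) ∪ Δ) := by
            refine (h1.inv_and P (Fmla.notMem n 0) (Fmla.notMem n 0) (Or.inr rfl)).mono ?_
              le_rfl
            intro x hx
            simp only [Finset.coe_insert, Set.image_insert_eq, Set.mem_insert_iff,
              Set.mem_diff, Set.mem_singleton_iff, Set.mem_union] at hx ⊢
            tauto
          obtain ⟨B₂, hB₂, v₂⟩ := IH α₀ hα (insert n ts) Δ hpos d2 ρ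
          refine ⟨B₂, hB₂, val_mono ?_ ρ _ (hpos _ hB₂) v₂⟩
          intro t ht
          refine ht.trans_le ?_
          have hβ' : (insert n ts).sup (fun t => (hwf.apply t).rank) ≤ β + 2 ^ α₀ := by
            rw [Finset.sup_insert]
            exact sup_le hrank (le_self_add (a := β))
          calc (insert n ts).sup (fun t => (hwf.apply t).rank) + 2 ^ α₀
              ≤ (β + 2 ^ α₀) + 2 ^ α₀ := add_le_add_left hβ' _
            _ = β + (2 ^ α₀ + 2 ^ α₀) := by rw [add_assoc]
            _ ≤ β + 2 ^ α := add_le_add_right (hdub hα) β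
        · exact ⟨B, hB, val_mono (step hα.le) ρ _ (hpos _ hB) v⟩
      · obtain ⟨t, -, h⟩ := h
        exact absurd h (by simp)
      · have hp := hpos _ h
        have d1 : Der α₀ ({negProg r} ∪ ((fun t => Fmla.notMem t 0) '' ↑ts) ∪
            insert (A n) Δ) := h1.mono insert_union_third.subset le_rfl
        obtain ⟨B, hB, v⟩ := IH α₀ hα ts (insert (A n) Δ)
          (fun C hC => by
            rw [Set.mem_insert_iff] at hC
            rcases hC with rfl | hC
            exacts [hp n, hpos _ hC]) d1 ρ
        rw [Set.mem_insert_iff] at hB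
        rcases hB with rfl | hB
        · exact ⟨_, h, ⟨n, val_mono (step hα.le) ρ _ (hp n) v⟩⟩
        · exact ⟨B, hB, val_mono (step hα.le) ρ _ (hpos _ hB) v⟩

end Aux


/-- The boundedness lemma: if
`⊢^α ¬Prog(≺,X), t₁ ∉ X, …, t_n ∉ X, Δ` with `Δ` a finite set of
`X`-positive formulas, then `∀X ⋁Δ[X ↦ ≺_γ]` is true in the standard model,
where `γ = β + 2^α` and `β` is the maximum of the ranks `|tᵢ|_≺`. -/
theorem boundedness_lemma (r : ℕ → ℕ → Prop) (hwf : WellFounded r)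
    (htrans : ∀ x y z, r x y → r y z → r x z)
    (htri : ∀ x ∈ rfield r, ∀ y ∈ rfield r, r x y ∨ x = y ∨ r y x)
    (α : Ordinal) (Δ : Set Fmla) (hfin : Δ.Finite) (hpos : ∀ A ∈ Δ, XPos A)
    (ts : Finset ℕ)
    (hder : Der α ({negProg r} ∪ ((fun t => Fmla.notMem t 0) '' ↑ts) ∪ Δ)) :
    ∀ ρ : ℕ → Set ℕ, ∃ A ∈ Δ,
      Val ρ (substX (fun t => (hwf.apply t).rank < ts.sup (fun t => (hwf.apply t).rank) + 2 ^ α) A) := by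
  exact bounded_aux r hwf α ts Δ hpos hder
end

section
/- Soundness of the cut-free ω-calculus: if ⊢^α Δ (for any ordinal α), then the universal closure over the free set variables of the disjunction ⋁Δ is true in the standard model (ℕ, P(ℕ)). The proof is by induction on the derivation. -/
/-- Soundness of the cut-free ω-calculus: if `⊢^α Δ` then for every assignment
of subsets of `ℕ` to the free set variables, some formula of `Δ` is true in
the standard model `(ℕ, 𝒫(ℕ))`. -/
theorem Der.sound {α : Ordinal} {Δ : Set Fmla} (h : Der α Δ) :
    ∀ ρ : ℕ → Set ℕ, ∃ A ∈ Δ, Val ρ A := by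
  induction h with
  | axM hP hmem => exact fun ρ => ⟨_, hmem, hP⟩
  | @axL _ _ s t X hst h₁ h₂ =>
    intro ρ
    by_cases hx : s ∈ ρ X
    · exact ⟨_, h₂, hst ▸ hx⟩
    · exact ⟨_, h₁, hx⟩
  | and h₁ h₂ hα₁ hα₂ hmem ih₁ ih₂ =>
    intro ρ
    rcases ih₁ ρ with ⟨A, hA, hv⟩
    rcases hA with rfl | hA
    · rcases ih₂ ρ with ⟨B, hB, hv'⟩
      rcases hB with rfl | hB
      · exact ⟨_, hmem, hv, hv'⟩
      · exact ⟨B, hB, hv'⟩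
    · exact ⟨A, hA, hv⟩
  | @or _ _ _ A₁ A₂ i h hα hmem ih =>
    intro ρ
    rcases ih ρ with ⟨A, hA, hv⟩
    rcases hA with rfl | hA
    · refine ⟨_, hmem, ?_⟩
      split at hv
      · exact Or.inl hv
      · exact Or.inr hv
    · exact ⟨A, hA, hv⟩
  | @all _ _ _ A h hα hmem ih =>
    intro ρ
    by_cases hv : ∀ i, Val ρ (A i)
    · exact ⟨_, hmem, hv⟩
    · push_neg at hv
      obtain ⟨i, hi⟩ := hv
      rcases ih i ρ with ⟨B, hB, hvB⟩
      rcases hB with rfl | hB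
      · exact absurd hvB hi
      · exact ⟨B, hB, hvB⟩
  | ex h hα hmem ih =>
    intro ρ
    rcases ih ρ with ⟨A, hA, hv⟩
    rcases hA with rfl | hA
    · exact ⟨_, hmem, _, hv⟩
    · exact ⟨A, hA, hv⟩
end
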